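/- Let T be a rigid object in the skeletally small category C and let L_S : C → C_S be the Gabriel–Zisman localisation of C at the class S. For every object Y of C_S there is an object X of C(T) such that X ≅ Y in C_S. -/

import Mathlib

/-!
Common setup: `C` is a Hom-finite, Krull-Schmidt (= idempotent complete, given
Hom-finiteness over a field), `k`-linear triangulated category with suspension
functor `Σ = shiftFunctor C (1 : ℤ)`, and `T` is a rigid object of `C`.
-/

noncomputable section

open CategoryTheory CategoryTheory.Limits CategoryTheory.Pretriangulated

universe v u

namespace PaperBM

variable {C : Type u} [Category.{v} C] [Preadditive C] [HasZeroObject C]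
  [HasShift C ℤ] [∀ n : ℤ, (shiftFunctor C n).Additive] [Pretriangulated C]
  [HasFiniteBiproducts C]

/-- `X` lies in `add T`: it is a direct summand of a finite direct sum of copies of `T`. -/
def memAdd (T X : C) : Prop :=
  ∃ (n : ℕ) (s : X ⟶ ⨁ (fun _ : Fin n => T)) (r : (⨁ fun _ : Fin n => T) ⟶ X), s ≫ r = 𝟙 X

/-- `T` is rigid: `Hom_C(T, ΣT) = 0`. -/
def IsRigidObj (T : C) : Prop := ∀ f : T ⟶ (shiftFunctor C (1 : ℤ)).obj T, f = 0

/-- `Y ∈ T^⊥`, i.e. `Hom_C(X, ΣY) = 0` for all `X ∈ add T`. -/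
def memTperp (T Y : C) : Prop :=
  ∀ (X : C), memAdd T X → ∀ f : X ⟶ (shiftFunctor C (1 : ℤ)).obj Y, f = 0

/-- `Y ∈ ⊥T`, i.e. `Hom_C(Y, ΣX) = 0` for all `X ∈ add T`. -/
def memPerpT (T Y : C) : Prop :=
  ∀ (X : C), memAdd T X → ∀ f : Y ⟶ (shiftFunctor C (1 : ℤ)).obj X, f = 0

/-- `Y ∈ ΣT^⊥`, the image of `T^⊥` under the suspension `Σ`. -/
def memSigmaTperp (T Y : C) : Prop :=
  ∃ Z : C, memTperp T Z ∧ Nonempty (Y ≅ (shiftFunctor C (1 : ℤ)).obj Z)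

/-- The map `f` factors through an object belonging to the class `P` of objects. -/
def FactorsThru (P : C → Prop) {A B : C} (f : A ⟶ B) : Prop :=
  ∃ (Z : C) (g : A ⟶ Z) (h : Z ⟶ B), P Z ∧ g ≫ h = f

/-- The class `S̃` of maps `f : X ⟶ Y` such that in a completion
`Σ⁻¹Z →h X →f Y →g Z` of `f` to a triangle (where `A` plays the role of `Σ⁻¹Z`,
so that `Z = ΣA`), both `g` and `h` factor through an object of `ΣT^⊥`. -/
def Stilde (T : C) : MorphismProperty C := fun X Y f =>
  ∃ (A : C) (h : A ⟶ X) (g : Y ⟶ (shiftFunctor C (1 : ℤ)).obj A),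
    (Triangle.mk h f g ∈ distTriang C) ∧
    FactorsThru (memSigmaTperp T) g ∧ FactorsThru (memSigmaTperp T) h

/-- The class `S` of maps `f : X ⟶ Y` such that in a completion
`Σ⁻¹Z →h X →f Y →g Z` of `f` to a triangle (where `A` plays the role of `Σ⁻¹Z`,
so that `Z = ΣA`), `g` factors through an object of `ΣT^⊥` and `Σ⁻¹Z ∈ ΣT^⊥`. -/
def Sclass (T : C) : MorphismProperty C := fun X Y f =>
  ∃ (A : C) (h : A ⟶ X) (g : Y ⟶ (shiftFunctor C (1 : ℤ)).obj A),
    (Triangle.mk h f g ∈ distTriang C) ∧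
    FactorsThru (memSigmaTperp T) g ∧ memSigmaTperp T A

/-- `X ∈ C(T)`: there is a triangle `T₁ → T₀ → X → ΣT₁` with `T₀, T₁ ∈ add T`. -/
def memCT (T X : C) : Prop :=
  ∃ (T₁ T₀ : C) (a : T₁ ⟶ T₀) (b : T₀ ⟶ X) (c : X ⟶ (shiftFunctor C (1 : ℤ)).obj T₁),
    memAdd T T₁ ∧ memAdd T T₀ ∧ (Triangle.mk a b c ∈ distTriang C)

/-- `f : X₀ ⟶ Y` is a right `P`-approximation of `Y`. -/
def IsRightApprox (P : C → Prop) {X₀ Y : C} (f : X₀ ⟶ Y) : Prop :=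
  P X₀ ∧ ∀ (W : C), P W → ∀ g : W ⟶ Y, ∃ g' : W ⟶ X₀, g' ≫ f = g

/-- `f : Y ⟶ X₀` is a left `P`-approximation of `Y`. -/
def IsLeftApprox (P : C → Prop) {Y X₀ : C} (f : Y ⟶ X₀) : Prop :=
  P X₀ ∧ ∀ (W : C), P W → ∀ g : Y ⟶ W, ∃ g' : X₀ ⟶ W, f ≫ g' = g

/-- The map `f : X₀ ⟶ Y` is right minimal. -/
def IsRightMinimal {X₀ Y : C} (f : X₀ ⟶ Y) : Prop :=
  ∀ g : X₀ ⟶ X₀, g ≫ f = f → IsIso g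

/-- The functor `H = Hom_C(T, -) : C ⥤ Mod End_C(T)ᵒᵖ`.  Here, with Mathlib's
conventions, the endomorphism ring `End (Opposite.op T)` of `T` viewed in `Cᵒᵖ` plays
the role of `End_C(T)ᵒᵖ`, so that each `Hom_C(T, X)` is a left module over it. -/
abbrev homFunctor (T : C) : C ⥤ ModuleCat.{v} (End (Opposite.op T)) :=
  preadditiveCoyonedaObj T ⋙ ModuleCat.restrictScalars
    { toFun := fun r => MulOpposite.op r.unop
      map_one' := rfl
      map_mul' := fun _ _ => rfl
      map_zero' := rfl
      map_add' := fun _ _ => rfl }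

/-- The predicate on `End_C(T)ᵒᵖ`-modules of being finite-dimensional (equivalently,
since `End_C(T)` is a finite-dimensional algebra, finitely generated). -/
abbrev isFinDim (T : C) : ModuleCat.{v} (End (Opposite.op T)) → Prop :=
  fun M => Module.Finite (End (Opposite.op T)) M

/-- The category `mod End_C(T)ᵒᵖ` of finite-dimensional `End_C(T)ᵒᵖ`-modules. -/
abbrev fdMod (T : C) := ObjectProperty.FullSubcategory (isFinDim T)

/-- The ideal relation on `C(T)` of maps factoring through an object of `ΣT^⊥`. -/
def homRelCT (T : C) : HomRel (ObjectProperty.FullSubcategory (memCT T)) :=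
  fun A B f g => FactorsThru (memSigmaTperp T) ((f.hom - g.hom : A.obj ⟶ B.obj))

/-- The ideal relation on `C(T)` of maps factoring through an object of `add ΣT`. -/
def homRelCTadd (T : C) : HomRel (ObjectProperty.FullSubcategory (memCT T)) :=
  fun A B f g => FactorsThru (memAdd ((shiftFunctor C (1 : ℤ)).obj T)) ((f.hom - g.hom : A.obj ⟶ B.obj))

/-- The ideal relation on `C` of maps factoring through an object of `add ΣT`. -/
def homRelAdd (T : C) : HomRel C :=
  fun A B f g => FactorsThru (memAdd ((shiftFunctor C (1 : ℤ)).obj T)) (f - g)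

end PaperBM

/-!
Given `X`, take a right `add T`-approximation `β : T₀ ⟶ X` and complete it to a triangle
`X₁ → T₀ → X → ΣX₁`; rigidity of `T` puts `X₁` in `T^⊥`. A right `add T`-approximation
`α : T₁ ⟶ X₁` gives `X' := cone (T₁ → X₁ → T₀)` in `C(T)`, and the morphism of triangles
`(α, 𝟙, c)` gives `c : X' ⟶ X`. In a triangle `A → X' → X → ΣA` on `c`, the map `X → ΣA`
kills `β`, hence factors through `ΣX₁ ∈ ΣT^⊥`; and `Hom(add T, A) = 0` because
`Hom(W, c)` is injective and `Hom(ΣW, c)` is surjective for `W ∈ add T`. So `c ∈ S`, and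
`c` becomes an isomorphism `X' ≅ X` in `C_S`.
-/

namespace PaperBM

lemma IsRightApprox.exists_shift_lift {C : Type u} [Category.{v} C] [HasShift C ℤ]
    {P : C → Prop} {T₁ X₁ W : C} {α : T₁ ⟶ X₁}
    (hα : IsRightApprox P α) (hW : P W) (n : ℤ) (e : W⟦n⟧ ⟶ X₁⟦n⟧) :
    ∃ e', e' ≫ α⟦n⟧' = e := by
  obtain ⟨w, hw⟩ := hα.2 W hW ((shiftFunctor C n).preimage e)
  exact ⟨w⟦n⟧', by rw [← Functor.map_comp, hw, Functor.map_preimage]⟩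

section Additive

variable {C : Type u} [Category.{v} C] [Preadditive C] [HasFiniteBiproducts C] {T : C}

lemma memAdd_biproduct (T : C) (n : ℕ) : memAdd T (⨁ fun _ : Fin n => T) :=
  ⟨n, 𝟙 _, 𝟙 _, Category.comp_id _⟩

lemma memAdd.eq_zero_of_forall_eq_zero {W Z : C} (hW : memAdd T W)
    (hT : ∀ f : T ⟶ Z, f = 0) (f : W ⟶ Z) : f = 0 := by
  obtain ⟨n, s, r, hsr⟩ := hW
  have hr : r ≫ f = 0 := biproduct.hom_ext' _ _ fun j => by rw [comp_zero]; exact hT _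
  rw [← Category.id_comp f, ← hsr, Category.assoc, hr, comp_zero]

lemma memAdd.eq_zero_of_forall_eq_zero_to_map {D : Type*} [Category D] [Preadditive D]
    (F : C ⥤ D) [F.Additive] {Z : D} {W : C} (hW : memAdd T W)
    (hT : ∀ f : Z ⟶ F.obj T, f = 0) (f : Z ⟶ F.obj W) : f = 0 := by
  obtain ⟨n, s, r, hsr⟩ := hW
  have hs : f ≫ F.map s = 0 := by
    rw [← Category.comp_id (f ≫ F.map s), ← F.map_id, ← biproduct.total, F.map_sum,
      Preadditive.comp_sum]
    exact Finset.sum_eq_zero fun j _ => by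
      rw [F.map_comp, ← Category.assoc, hT (_ ≫ _), zero_comp]
  rw [← Category.comp_id f, ← F.map_id, ← hsr, F.map_comp, ← Category.assoc, hs, zero_comp]

lemma isRightApprox_memAdd_of_forall_lift {T₀ Y : C} {β : T₀ ⟶ Y} (h₀ : memAdd T T₀)
    (hβ : ∀ f : T ⟶ Y, ∃ f', f' ≫ β = f) : IsRightApprox (memAdd T) β := by
  refine ⟨h₀, ?_⟩
  rintro W ⟨m, s, r, hsr⟩ f
  choose l hl using hβ
  have hdesc : biproduct.desc (fun j => l (biproduct.ι (fun _ : Fin m => T) j ≫ r ≫ f)) ≫ β =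
      r ≫ f :=
    biproduct.hom_ext' _ _ fun j => by rw [biproduct.ι_desc_assoc, hl]
  exact ⟨s ≫ biproduct.desc _, by rw [Category.assoc, hdesc, ← Category.assoc, hsr,
    Category.id_comp]⟩

lemma exists_isRightApprox_memAdd (k : Type*) [Field k] [Linear k C]
    [∀ X Y : C, FiniteDimensional k (X ⟶ Y)] (T Y : C) :
    ∃ (T₀ : C) (β : T₀ ⟶ Y), IsRightApprox (memAdd T) β := by
  obtain ⟨n, f, hf⟩ := Module.Finite.exists_fin (R := k) (M := T ⟶ Y)
  refine ⟨_, biproduct.desc f,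
    isRightApprox_memAdd_of_forall_lift (memAdd_biproduct T n) fun g => ?_⟩
  obtain ⟨a, rfl⟩ := (Submodule.mem_span_range_iff_exists_fun k).1
    (hf ▸ Submodule.mem_top : g ∈ Submodule.span k (Set.range f))
  exact ⟨∑ i, a i • biproduct.ι (fun _ : Fin n => T) i, by simp [Preadditive.sum_comp]⟩

variable [HasShift C ℤ]

lemma memSigmaTperp_of_forall_eq_zero {A : C} (hA : ∀ W, memAdd T W → ∀ u : W ⟶ A, u = 0) :
    memSigmaTperp T A :=
  let e := (shiftFunctorCompIsoId C (-1 : ℤ) 1 (by norm_num)).app A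
  ⟨A⟦(-1 : ℤ)⟧, fun W hW f => (Preadditive.IsIso.comp_right_eq_zero _ e.hom).1 (hA W hW _),
    ⟨e.symm⟩⟩

variable [∀ n : ℤ, (shiftFunctor C n).Additive]

lemma IsRigidObj.eq_zero (hT : IsRigidObj T) {W V : C} (hW : memAdd T W) (hV : memAdd T V)
    (f : W ⟶ V⟦(1 : ℤ)⟧) : f = 0 :=
  hW.eq_zero_of_forall_eq_zero (fun g => hV.eq_zero_of_forall_eq_zero_to_map _ hT g) f

end Additive

section Pretriangulated

variable {C : Type u} [Category.{v} C] [Preadditive C] [HasZeroObject C] [HasShift C ℤ]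
  [∀ n : ℤ, (shiftFunctor C n).Additive] [Pretriangulated C]

lemma eq_zero_of_forall_shift_lift {A X' X W : C} {h' : A ⟶ X'} {c : X' ⟶ X}
    {γ : X ⟶ A⟦(1 : ℤ)⟧} (hdist : Triangle.mk h' c γ ∈ distTriang C)
    (hW : ∀ d : W⟦(1 : ℤ)⟧ ⟶ X, ∃ d', d' ≫ c = d) (u : W ⟶ A) (hu : u ≫ h' = 0) : u = 0 := by
  apply (shiftFunctor C (1 : ℤ)).map_injective
  have hu' : u⟦(1 : ℤ)⟧' ≫ (-h'⟦(1 : ℤ)⟧') = 0 := by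
    rw [Preadditive.comp_neg, ← Functor.map_comp, hu, Functor.map_zero, neg_zero]
  obtain ⟨d, hd⟩ : ∃ d : W⟦(1 : ℤ)⟧ ⟶ X, u⟦(1 : ℤ)⟧' = d ≫ γ :=
    Triangle.coyoneda_exact₃ _ (rot_of_distTriang _ hdist) _ hu'
  obtain ⟨d', rfl⟩ := hW d
  have hcγ : c ≫ γ = 0 := comp_distTriang_mor_zero₂₃ _ hdist
  rw [hd, Category.assoc, hcγ, comp_zero, Functor.map_zero]

variable {T₁ X₁ T₀ X X' : C} {α : T₁ ⟶ X₁} {g : X₁ ⟶ T₀} {β : T₀ ⟶ X}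
  {h : X ⟶ X₁⟦(1 : ℤ)⟧} {p : T₀ ⟶ X'} {q : X' ⟶ T₁⟦(1 : ℤ)⟧} {c : X' ⟶ X}

lemma exists_lift_of_forall_shift_lift (hdist₁ : Triangle.mk (α ≫ g) p q ∈ distTriang C)
    (hdist₂ : Triangle.mk g β h ∈ distTriang C) (hpc : p ≫ c = β)
    (hqc : q ≫ α⟦(1 : ℤ)⟧' = c ≫ h) {V : C}
    (hV : ∀ e : V ⟶ X₁⟦(1 : ℤ)⟧, ∃ e', e' ≫ α⟦(1 : ℤ)⟧' = e) (d : V ⟶ X) :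
    ∃ d', d' ≫ c = d := by
  obtain ⟨e, he⟩ := hV (d ≫ h)
  have hhg : h ≫ g⟦(1 : ℤ)⟧' = 0 := comp_distTriang_mor_zero₃₁ _ hdist₂
  have he' : e ≫ (α ≫ g)⟦(1 : ℤ)⟧' = 0 := by
    rw [Functor.map_comp, reassoc_of% he, hhg, comp_zero]
  obtain ⟨d₁, rfl⟩ : ∃ d₁ : V ⟶ X', e = d₁ ≫ q := Triangle.coyoneda_exact₁ _ hdist₁ e he'
  have hd : (d - d₁ ≫ c) ≫ h = 0 := by
    rw [Preadditive.sub_comp, Category.assoc, ← hqc, ← Category.assoc, he, sub_self]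
  obtain ⟨t, ht⟩ : ∃ t : V ⟶ T₀, d - d₁ ≫ c = t ≫ β := Triangle.coyoneda_exact₃ _ hdist₂ _ hd
  exact ⟨d₁ + t ≫ p, by rw [Preadditive.add_comp, Category.assoc, hpc, ← ht, add_sub_cancel]⟩

variable [HasFiniteBiproducts C] {T : C}

lemma memTperp_of_isRightApprox (hT : IsRigidObj T) (hβ : IsRightApprox (memAdd T) β)
    (hdist : Triangle.mk g β h ∈ distTriang C) : memTperp T X₁ := by
  intro W hW u
  obtain ⟨v, rfl⟩ : ∃ v : W ⟶ X, u = v ≫ h :=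
    Triangle.coyoneda_exact₁ _ hdist u (hT.eq_zero hW hβ.1 _)
  obtain ⟨t, rfl⟩ := hβ.2 W hW v
  have hβh : β ≫ h = 0 := comp_distTriang_mor_zero₂₃ _ hdist
  rw [Category.assoc, hβh, comp_zero]

lemma eq_zero_of_comp_eq_zero_of_isRightApprox (hT : IsRigidObj T)
    (hα : IsRightApprox (memAdd T) α)
    (hdist₁ : Triangle.mk (α ≫ g) p q ∈ distTriang C) (hdist₂ : Triangle.mk g β h ∈ distTriang C)
    (hpc : p ≫ c = β) {W : C} (hW : memAdd T W) (v : W ⟶ X') (hv : v ≫ c = 0) : v = 0 := by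
  obtain ⟨t, rfl⟩ : ∃ t : W ⟶ T₀, v = t ≫ p :=
    Triangle.coyoneda_exact₃ _ hdist₁ v (hT.eq_zero hW hα.1 _)
  obtain ⟨s, rfl⟩ : ∃ s : W ⟶ X₁, t = s ≫ g :=
    Triangle.coyoneda_exact₂ _ hdist₂ t (by rwa [Category.assoc, hpc] at hv)
  obtain ⟨s', rfl⟩ := hα.2 W hW s
  have hz : (α ≫ g) ≫ p = 0 := comp_distTriang_mor_zero₁₂ _ hdist₁
  rw [Category.assoc, Category.assoc, ← Category.assoc α, hz, comp_zero]

lemma exists_memCT_and_sclass (k : Type*) [Field k] [Linear k C]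
    [∀ X Y : C, FiniteDimensional k (X ⟶ Y)] (hT : IsRigidObj T) (X : C) :
    ∃ (X' : C) (c : X' ⟶ X), memCT T X' ∧ Sclass T c := by
  obtain ⟨T₀, β, hβ⟩ := exists_isRightApprox_memAdd k T X
  obtain ⟨X₁, g, h, hdist₂⟩ := distinguished_cocone_triangle₁ β
  obtain ⟨T₁, α, hα⟩ := exists_isRightApprox_memAdd k T X₁
  obtain ⟨X', p, q, hdist₁⟩ := distinguished_cocone_triangle (α ≫ g)
  obtain ⟨c, hpc, hqc⟩ : ∃ c : X' ⟶ X, p ≫ c = 𝟙 T₀ ≫ β ∧ q ≫ α⟦(1 : ℤ)⟧' = c ≫ h :=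
    complete_distinguished_triangle_morphism _ _ hdist₁ hdist₂ α (𝟙 T₀) (Category.comp_id _)
  rw [Category.id_comp] at hpc
  obtain ⟨A, h', γ, hdist⟩ := distinguished_cocone_triangle₁ c
  have hcγ : c ≫ γ = 0 := comp_distTriang_mor_zero₂₃ _ hdist
  have hβγ : β ≫ γ = 0 := by rw [← hpc, Category.assoc, hcγ, comp_zero]
  obtain ⟨t, rfl⟩ : ∃ t : X₁⟦(1 : ℤ)⟧ ⟶ A⟦(1 : ℤ)⟧, γ = h ≫ t :=
    Triangle.yoneda_exact₃ _ hdist₂ γ hβγ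
  have hh'c : h' ≫ c = 0 := comp_distTriang_mor_zero₁₂ _ hdist
  have hγ : FactorsThru (memSigmaTperp T) (h ≫ t) :=
    ⟨_, h, t, ⟨X₁, memTperp_of_isRightApprox hT hβ hdist₂, ⟨Iso.refl _⟩⟩, rfl⟩
  have hA : memSigmaTperp T A := memSigmaTperp_of_forall_eq_zero fun W hW u =>
    eq_zero_of_forall_shift_lift hdist
      (exists_lift_of_forall_shift_lift hdist₁ hdist₂ hpc hqc (hα.exists_shift_lift hW 1))
      u (eq_zero_of_comp_eq_zero_of_isRightApprox hT hα hdist₁ hdist₂ hpc hW _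
        (by rw [Category.assoc, hh'c, comp_zero]))
  exact ⟨X', c, ⟨T₁, T₀, α ≫ g, p, q, hα.1, hβ.1, hdist₁⟩, A, h', h ≫ t, hdist, hγ, hA⟩

end Pretriangulated

end PaperBM

open PaperBM

/-- Every object of the Gabriel–Zisman localisation `C_S` of `C` at the class `S` is
isomorphic, in `C_S`, to (the image of) an object of `C(T)`. -/
theorem statement_10 {C : Type u} [Category.{v} C] [Preadditive C] [HasZeroObject C]
    [HasShift C ℤ] [∀ n : ℤ, (shiftFunctor C n).Additive] [Pretriangulated C]
    [HasFiniteBiproducts C]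
    {k : Type*} [Field k] [CategoryTheory.Linear k C]
    [∀ X Y : C, FiniteDimensional k (X ⟶ Y)] [IsIdempotentComplete C]
    [EssentiallySmall.{v} C] (T : C) (hT : IsRigidObj T)
    (Y : (Sclass T).Localization) :
    ∃ X : C, memCT T X ∧ Nonempty ((Sclass T).Q.obj X ≅ Y) := by
  obtain ⟨X, c, hX, hc⟩ := exists_memCT_and_sclass k hT
    ((Localization.Construction.objEquiv (Sclass T)).symm Y)
  exact ⟨X, hX, ⟨Localization.Construction.wIso c hc ≪≫
    eqToIso ((Localization.Construction.objEquiv (Sclass T)).apply_symm_apply Y)⟩⟩
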